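/- Let f be analytic on the unit disc D satisfying, for all z ∈ D, the lower growth bound |f(z)| ≥ 2|z|/((1+c)(1+|z|)²) for a constant c > 0, and suppose f is an open map with f(0) = 0. Then the open disc {w : |w| < 1/(2(1+c))} is contained in f(D). -/

import Mathlib

/-!
Let `S = f(D)`, which is open. For `|w| < 1/(2(1+c))` pick `s < 1` with
`|w| < 2s/((1+c)(1+s)²)`; since this bound increases in `s` and tends to `1/(2(1+c))` as `s → 1`,
every point of `S` close to `w` is the image of a point of the compact disc `|z| ≤ s`.
Hence `w ∈ closure S` forces `w ∈ S`, and as the disc `|w| < 1/(2(1+c))` is connected and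
meets `S` at `0 = f 0`, it lies in `S`.
-/

open Metric Set Filter Topology

theorem ball_inter_closure_image_subset_image {X E : Type*} [PseudoMetricSpace X] [ProperSpace X]
    [MetricSpace E] {f : X → E} {x : X} {y : E} {r ρ : ℝ}
    (hf : ContinuousOn f (ball x r))
    (hbd : ∀ ρ' < ρ, ∃ s < r, ∀ z ∈ ball x r, s < dist z x → ρ' ≤ dist (f z) y) :
    ball y ρ ∩ closure (f '' ball x r) ⊆ f '' ball x r := by
  rintro w ⟨hwρ, hwS⟩
  obtain ⟨ρ', hwρ', hρ'⟩ := exists_between (mem_ball.mp hwρ)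
  obtain ⟨s, hsr, hs⟩ := hbd ρ' hρ'
  have hsub : closedBall x s ⊆ ball x r := closedBall_subset_ball hsr
  have hnear : ball y ρ' ∩ f '' ball x r ⊆ f '' closedBall x s := by
    rintro _ ⟨hv, z, hz, rfl⟩
    refine ⟨z, mem_closedBall.mpr (not_lt.mp fun hzs => ?_), rfl⟩
    exact (hs z hz hzs).not_gt (mem_ball.mp hv)
  have hclosed : IsClosed (f '' closedBall x s) :=
    ((isCompact_closedBall x s).image_of_continuousOn (hf.mono hsub)).isClosed
  have hw : w ∈ closure (ball y ρ' ∩ f '' ball x r) :=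
    isOpen_ball.inter_closure ⟨mem_ball.mpr hwρ', hwS⟩
  exact image_mono hsub (hclosed.closure_subset_iff.mpr hnear hw)

theorem ball_subset_image_of_dist_ge {X E : Type*} [PseudoMetricSpace X] [ProperSpace X]
    [NormedAddCommGroup E] [NormedSpace ℝ E] {f : X → E} {x : X} {y : E} {r ρ : ℝ}
    (hf : ContinuousOn f (ball x r)) (hopen : IsOpen (f '' ball x r)) (hr : 0 < r) (hx : f x = y)
    (hbd : ∀ ρ' < ρ, ∃ s < r, ∀ z ∈ ball x r, s < dist z x → ρ' ≤ dist (f z) y) :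
    ball y ρ ⊆ f '' ball x r := by
  rcases le_or_gt ρ 0 with hρ | hρ
  · simp [ball_eq_empty.mpr hρ]
  refine (convex_ball y ρ).isPreconnected.subset_of_closure_inter_subset hopen
    ⟨y, mem_ball_self hρ, x, mem_ball_self hr, hx⟩ ?_
  rw [inter_comm]
  exact ball_inter_closure_image_subset_image hf hbd

theorem monotoneOn_koebe_lower_bound {c : ℝ} (hc : 0 < 1 + c) :
    MonotoneOn (fun r : ℝ => 2 * r / ((1 + c) * (1 + r) ^ 2)) (Icc 0 1) := by
  rintro a ⟨ha, -⟩ b ⟨-, hb⟩ hab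
  have hab1 : a * b ≤ 1 := by nlinarith
  have hpos : ∀ t : ℝ, 0 ≤ t → 0 < (1 + c) * (1 + t) ^ 2 := fun t ht =>
    mul_pos hc (pow_pos (by linarith) 2)
  dsimp only
  rw [div_le_div_iff₀ (hpos a ha) (hpos b (ha.trans hab))]
  -- cross-multiplied, the difference of the two sides is `2(1+c)(b-a)(1-ab)`
  nlinarith [mul_nonneg (mul_nonneg hc.le (sub_nonneg.2 hab)) (sub_nonneg.2 hab1)]

theorem exists_lt_one_forall_le_koebe_lower_bound {c ρ' : ℝ} (hc : 0 < 1 + c)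
    (hρ' : ρ' < 1 / (2 * (1 + c))) :
    ∃ s < 1, ∀ r, s < r → r ≤ 1 → ρ' ≤ 2 * r / ((1 + c) * (1 + r) ^ 2) := by
  set F : ℝ → ℝ := fun r => 2 * r / ((1 + c) * (1 + r) ^ 2)
  have hF1 : F 1 = 1 / (2 * (1 + c)) := by
    simp only [F]
    field_simp
    norm_num
  have hFcont : ContinuousAt F 1 := by
    refine ContinuousAt.div (by fun_prop) (by fun_prop) ?_
    positivity
  have hlim : Tendsto F (𝓝[<] 1) (𝓝 (1 / (2 * (1 + c)))) :=
    hF1 ▸ hFcont.continuousWithinAt.tendsto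
  obtain ⟨s, hρ's, hs0, hs1⟩ :=
    ((hlim.eventually_const_lt hρ').and (Ioo_mem_nhdsLT zero_lt_one)).exists
  refine ⟨s, hs1, fun r hsr hr1 => hρ's.le.trans ?_⟩
  exact monotoneOn_koebe_lower_bound hc ⟨hs0.le, hs1.le⟩ ⟨hs0.le.trans hsr.le, hr1⟩ hsr.le

theorem koebe_domain_from_lower_bound (c : ℝ) (hc : 0 < c) (f : ℂ → ℂ)
    (hfa : AnalyticOn ℂ f (Metric.ball (0:ℂ) 1))
    (hlow : ∀ z ∈ Metric.ball (0:ℂ) 1,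
      2 * ‖z‖ / ((1 + c) * (1 + ‖z‖)^2) ≤ ‖f z‖)
    (hopen : ∀ U ⊆ Metric.ball (0:ℂ) 1, IsOpen U → IsOpen (f '' U))
    (hf0 : f 0 = 0) :
    Metric.ball (0:ℂ) (1 / (2 * (1 + c))) ⊆ f '' Metric.ball (0:ℂ) 1 := by
  have hc1 : 0 < 1 + c := by linarith
  refine ball_subset_image_of_dist_ge hfa.continuousOn (hopen _ subset_rfl isOpen_ball) one_pos
    hf0 fun ρ' hρ' => ?_
  obtain ⟨s, hs1, hs⟩ := exists_lt_one_forall_le_koebe_lower_bound hc1 hρ'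
  refine ⟨s, hs1, fun z hz hsz => ?_⟩
  rw [dist_zero_right] at hsz ⊢
  exact (hs ‖z‖ hsz (mem_ball_zero_iff.mp hz).le).trans (hlow z hz)
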